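/- arXiv:1412.0531 — 3 statements merged into one kernel-verified Lean document; each statement's English description precedes it below -/
import Mathlib

section
/- Let n ≥ 1, let f : ℝⁿ → ℝ be differentiable, let B : ℝⁿ → End(ℝⁿ) be any map, and define K : ℝⁿ × ℝⁿ → ℝ by K(q,p) := f(q). Fix (q₀,p₀) ∈ ℝⁿ × ℝⁿ and set q(t) := q₀ and p(t) := p₀ − t∇f(q₀). Then for every t ∈ ℝ the curve (q(t),p(t)) satisfies the twisted Hamilton equations q̇(t) = ∇_p K(q(t),p(t)) and ṗ(t) = −∇_q K(q(t),p(t)) − B(q(t)) ∇_p K(q(t),p(t)). In particular, the twisted Hamiltonian flow of the function f∘π is the fibrewise translation Φ_t(q,p) = (q, p − t∇f(q)), independently of the magnetic field B. -/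
open scoped RealInnerProductSpace

theorem gradient_snd_eq_zero_of_eq_comp_fst {E F : Type*} [NormedAddCommGroup F]
    [InnerProductSpace ℝ F] [CompleteSpace F] {f : E → ℝ} {K : E × F → ℝ}
    (hK : ∀ q p, K (q, p) = f q) (q : E) (p : F) :
    gradient (fun p' => K (q, p')) p = 0 := by
  simpa only [hK] using gradient_fun_const p (f q)

theorem deriv_const_sub_smul {F : Type*} [NormedAddCommGroup F] [NormedSpace ℝ F]
    (p₀ v : F) (t : ℝ) :
    deriv (fun s : ℝ => p₀ - s • v) t = -v := by
  simpa using ((hasDerivAt_id t).smul_const v).const_sub p₀ |>.deriv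

theorem twisted_flow_of_basic_hamiltonian_is_fibrewise_translation_general
    (n : ℕ)
    (f : EuclideanSpace ℝ (Fin n) → ℝ)
    (B : EuclideanSpace ℝ (Fin n) →
      EuclideanSpace ℝ (Fin n) →L[ℝ] EuclideanSpace ℝ (Fin n))
    (K : EuclideanSpace ℝ (Fin n) × EuclideanSpace ℝ (Fin n) → ℝ)
    (hK : ∀ q p : EuclideanSpace ℝ (Fin n), K (q, p) = f q)
    (q₀ p₀ : EuclideanSpace ℝ (Fin n))
    (q p : ℝ → EuclideanSpace ℝ (Fin n))
    (hq : q = fun _ => q₀)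
    (hp : p = fun t => p₀ - t • gradient f q₀) :
    ∀ t : ℝ,
      deriv q t = gradient (fun p' => K (q t, p')) (p t) ∧
      deriv p t =
        -gradient (fun q' => K (q', p t)) (q t)
          - B (q t) (gradient (fun p' => K (q t, p')) (p t)) := by
  intro t
  subst hq hp
  have hKq : (fun q' => K (q', p₀ - t • gradient f q₀)) = f := funext fun q' => hK q' _
  -- `∇_p K = 0` both freezes `q` and kills the magnetic term `B(q)∇_p K`.
  rw [gradient_snd_eq_zero_of_eq_comp_fst hK, hKq, map_zero, sub_zero,
    deriv_const_sub_smul]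
  exact ⟨deriv_const t q₀, rfl⟩

/-- The Lemma of Section 6 of the paper: for `K(q,p) = f(q)`, the curve
`t ↦ (q₀, p₀ - t∇f(q₀))` solves the twisted Hamilton equations
`q̇ = ∇_p K`, `ṗ = -∇_q K - B(q)∇_p K`, for any magnetic field `B`.
Hence the twisted Hamiltonian flow of `f ∘ π` is the fibrewise translation
`Φ_t(q,p) = (q, p - t∇f(q))`, independently of `B`. -/
theorem twisted_flow_of_basic_hamiltonian_is_fibrewise_translation
    (n : ℕ) (hn : 1 ≤ n)
    (f : EuclideanSpace ℝ (Fin n) → ℝ)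
    (hf : Differentiable ℝ f)
    (B : EuclideanSpace ℝ (Fin n) →
      EuclideanSpace ℝ (Fin n) →L[ℝ] EuclideanSpace ℝ (Fin n))
    (K : EuclideanSpace ℝ (Fin n) × EuclideanSpace ℝ (Fin n) → ℝ)
    (hK : ∀ q p : EuclideanSpace ℝ (Fin n), K (q, p) = f q)
    (q₀ p₀ : EuclideanSpace ℝ (Fin n))
    (q p : ℝ → EuclideanSpace ℝ (Fin n))
    (hq : q = fun _ => q₀)
    (hp : p = fun t => p₀ - t • gradient f q₀) :
    ∀ t : ℝ,
      deriv q t = gradient (fun p' => K (q t, p')) (p t) ∧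
      deriv p t =
        -gradient (fun q' => K (q', p t)) (q t)
          - B (q t) (gradient (fun p' => K (q t, p')) (p t)) :=
  twisted_flow_of_basic_hamiltonian_is_fibrewise_translation_general n f B K hK q₀ p₀ q p hq hp
end

section
/- Let F be a real normed vector space, X a set, H : X × F → ℝ a function, v : X → F a map, and constants H₀ > 0, H₁ ∈ ℝ, B ≥ 0, ε > 0, k ∈ ℝ. Assume: (i) H(q,p) ≥ H₀‖p‖ − H₁ for all (q,p); (ii) whenever H(q,p) ≤ k one has ‖p‖ ≤ B; (iii) ‖v(q)‖ ≥ ε for every q ∈ X for which there exists p with H(q,p) ≤ k. Then for every T > (k + H₁ + H₀B)/(H₀ε) and every (q,p) with H(q,p) ≤ k, one has H(q, p − T·v(q)) > k. -/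
/-!
Translating `p` by `-T • v q` moves it to norm at least `T * ε - B`, and superlinearity turns
this into `H ≥ H₀ * (T * ε - B) - H₁`, which exceeds `k` exactly when `T` is past the threshold.
-/

theorem norm_sub_smul_ge {E : Type*} [SeminormedAddCommGroup E] [NormedSpace ℝ E]
    {p v : E} {T ε B : ℝ} (hT : 0 ≤ T) (hv : ε ≤ ‖v‖) (hp : ‖p‖ ≤ B) :
    T * ε - B ≤ ‖p - T • v‖ :=
  calc T * ε - B ≤ ‖T • v‖ - ‖p‖ := by
        rw [norm_smul, Real.norm_of_nonneg hT]
        linarith [mul_le_mul_of_nonneg_left hv hT]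
    _ ≤ ‖T • v - p‖ := norm_sub_norm_le _ _
    _ = ‖p - T • v‖ := norm_sub_rev _ _

theorem fibrewise_translation_displaces_sublevel_general
    {F : Type*} [NormedAddCommGroup F] [NormedSpace ℝ F] {X : Type*}
    (H : X → F → ℝ) (v : X → F)
    (H₀ H₁ B ε k : ℝ)
    (hH₀ : 0 < H₀) (hε : 0 < ε)
    (hsuper : ∀ (q : X) (p : F), H₀ * ‖p‖ - H₁ ≤ H q p)
    (hbounded : ∀ (q : X) (p : F), H q p ≤ k → ‖p‖ ≤ B)
    (hv : ∀ q : X, (∃ p : F, H q p ≤ k) → ε ≤ ‖v q‖) :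
    ∀ T : ℝ, (k + H₁ + H₀ * B) / (H₀ * ε) < T →
      ∀ (q : X) (p : F), H q p ≤ k → k < H q (p - T • v q) := by
  intro T hT q p hp
  have hpB : ‖p‖ ≤ B := hbounded q p hp
  have hB : 0 ≤ B := (norm_nonneg p).trans hpB
  have hkH₁ : 0 ≤ k + H₁ := by linarith [hsuper q p, mul_nonneg hH₀.le (norm_nonneg p)]
  have hT_pos : 0 < T := lt_of_le_of_lt (by positivity) hT
  have hT_mul : k + H₁ + H₀ * B < T * (H₀ * ε) := (div_lt_iff₀ (by positivity)).mp hT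
  have hnorm : T * ε - B ≤ ‖p - T • v q‖ := norm_sub_smul_ge hT_pos.le (hv q ⟨p, hp⟩) hpB
  calc k < H₀ * (T * ε - B) - H₁ := by linarith
    _ ≤ H₀ * ‖p - T • v q‖ - H₁ := by gcongr
    _ ≤ H q (p - T • v q) := hsuper q _

/-- The key estimate in the proof of Theorem 1.4 of the paper: if `H` is
superlinear in the fibre, the sublevel `{H ≤ k}` is bounded in the fibre by
`B`, and `‖v(q)‖ ≥ ε` over the projection of the sublevel set, then for
`T > (k + H₁ + H₀B)/(H₀ε)` the fibrewise translation by `-T·v(q)` pushes the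
sublevel set `{H ≤ k}` entirely outside of itself. -/
theorem fibrewise_translation_displaces_sublevel
    {F : Type*} [NormedAddCommGroup F] [NormedSpace ℝ F] {X : Type*}
    (H : X → F → ℝ) (v : X → F)
    (H₀ H₁ B ε k : ℝ)
    (hH₀ : 0 < H₀) (hB : 0 ≤ B) (hε : 0 < ε)
    (hsuper : ∀ (q : X) (p : F), H₀ * ‖p‖ - H₁ ≤ H q p)
    (hbounded : ∀ (q : X) (p : F), H q p ≤ k → ‖p‖ ≤ B)
    (hv : ∀ q : X, (∃ p : F, H q p ≤ k) → ε ≤ ‖v q‖) :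
    ∀ T : ℝ, (k + H₁ + H₀ * B) / (H₀ * ε) < T →
      ∀ (q : X) (p : F), H q p ≤ k → k < H q (p - T • v q) :=
  fibrewise_translation_displaces_sublevel_general H v H₀ H₁ B ε k hH₀ hε hsuper hbounded hv
end

section
/- Let 𝓗 be a real Hilbert space, v : 𝓗 → 𝓗 a continuous map, R > 0, and let u : [0,R] → 𝓗 be a differentiable curve satisfying u'(r) = −v(u(r))/√(1 + ‖v(u(r))‖²) for every r ∈ [0,R]. Then ‖u(R) − u(0)‖² ≤ R · ∫₀ᴿ (−⟨v(u(r)), u'(r)⟩) dr. -/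
open scoped RealInnerProductSpace
open MeasureTheory Set intervalIntegral

/-!
The velocity `u' = -v(u)/√(1+‖v(u)‖²)` satisfies `‖u'‖² ≤ -⟪v(u), u'⟫` pointwise, because the
scalar factor `1/√(1+‖v‖²)` lies in `[0, 1]`. Hence it suffices to bound `‖u R - u 0‖²` by
`R ∫₀ᴿ ‖u'‖²`, which is the Cauchy–Schwarz inequality `(∫₀ᴿ ‖u'‖)² ≤ R ∫₀ᴿ ‖u'‖²` combined with
`‖u R - u 0‖ ≤ ∫₀ᴿ ‖u'‖`.
-/

theorem sq_integral_le_mul_integral_sq {f : ℝ → ℝ} {a b : ℝ} (hab : a ≤ b)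
    (hf : IntervalIntegrable f volume a b)
    (hf2 : IntervalIntegrable (fun x => f x ^ 2) volume a b) :
    (∫ x in a..b, f x) ^ 2 ≤ (b - a) * ∫ x in a..b, f x ^ 2 := by
  rcases hab.eq_or_lt with rfl | hab
  · simp
  have hjensen : (⨍ x in Ioc a b, f x) ^ 2 ≤ ⨍ x in Ioc a b, f x ^ 2 :=
    (Even.convexOn_pow even_two).map_set_average_le (continuousOn_pow 2) isClosed_univ
      (by simp [hab]) (by simp) (by simp) hf.1 hf2.1
  rw [setAverage_eq, setAverage_eq, Real.volume_real_Ioc_of_le hab.le, ← integral_of_le hab.le,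
    ← integral_of_le hab.le, smul_eq_mul, smul_eq_mul] at hjensen
  have hlen : b - a ≠ 0 := (sub_pos.2 hab).ne'
  calc (∫ x in a..b, f x) ^ 2 = (b - a) ^ 2 * ((b - a)⁻¹ * ∫ x in a..b, f x) ^ 2 := by
        field_simp
    _ ≤ (b - a) ^ 2 * ((b - a)⁻¹ * ∫ x in a..b, f x ^ 2) := by gcongr
    _ = (b - a) * ∫ x in a..b, f x ^ 2 := by field_simp

section NormedSpace

variable {E : Type*} [NormedAddCommGroup E] [NormedSpace ℝ E]

-- `E` need not be complete, so we test against a norming functional instead of writing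
-- `u b - u a` as a Bochner integral.
theorem norm_sub_le_integral_norm_of_hasDerivAt {u u' : ℝ → E} {a b : ℝ} (hab : a ≤ b)
    (hu : ∀ r ∈ Icc a b, HasDerivAt u (u' r) r) (hu' : ContinuousOn u' (Icc a b)) :
    ‖u b - u a‖ ≤ ∫ r in a..b, ‖u' r‖ := by
  obtain ⟨φ, hφ, hφu⟩ := exists_dual_vector'' ℝ (u b - u a)
  have hφu' : ContinuousOn (fun r => φ (u' r)) (Icc a b) := φ.continuous.comp_continuousOn hu'
  calc ‖u b - u a‖ = φ (u b) - φ (u a) := by rw [← map_sub, hφu]; rfl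
    _ = ∫ r in a..b, φ (u' r) := by
      refine (integral_eq_sub_of_hasDerivAt (f := fun r => φ (u r)) (fun r hr => ?_) ?_).symm
      · rw [uIcc_of_le hab] at hr
        exact φ.hasFDerivAt.comp_hasDerivAt r (hu r hr)
      · exact hφu'.intervalIntegrable_of_Icc hab
    _ ≤ ∫ r in a..b, ‖u' r‖ := by
      refine integral_mono_on hab (hφu'.intervalIntegrable_of_Icc hab)
        (hu'.norm.intervalIntegrable_of_Icc hab) fun r _ => ?_
      calc φ (u' r) ≤ ‖φ‖ * ‖u' r‖ := (le_abs_self _).trans (φ.le_opNorm _)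
        _ ≤ ‖u' r‖ := mul_le_of_le_one_left (norm_nonneg _) hφ

theorem norm_sub_sq_le_mul_integral_norm_sq_of_hasDerivAt {u u' : ℝ → E} {a b : ℝ}
    (hab : a ≤ b) (hu : ∀ r ∈ Icc a b, HasDerivAt u (u' r) r)
    (hu' : ContinuousOn u' (Icc a b)) :
    ‖u b - u a‖ ^ 2 ≤ (b - a) * ∫ r in a..b, ‖u' r‖ ^ 2 :=
  calc ‖u b - u a‖ ^ 2 ≤ (∫ r in a..b, ‖u' r‖) ^ 2 :=
        pow_le_pow_left₀ (norm_nonneg _) (norm_sub_le_integral_norm_of_hasDerivAt hab hu hu') 2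
    _ ≤ (b - a) * ∫ r in a..b, ‖u' r‖ ^ 2 :=
        sq_integral_le_mul_integral_sq hab (hu'.norm.intervalIntegrable_of_Icc hab)
          ((hu'.norm.pow 2).intervalIntegrable_of_Icc hab)

end NormedSpace

section InnerProductSpace

variable {E : Type*} [NormedAddCommGroup E] [InnerProductSpace ℝ E]

/-- The paper's normalized negative gradient `X_k = -♯η_k/√(1+|η_k|²)`, as a function of `♯η_k`. -/
noncomputable def normalizedNeg (x : E) : E := (-(1 / √(1 + ‖x‖ ^ 2))) • x

theorem continuous_normalizedNeg : Continuous (normalizedNeg : E → E) := by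
  unfold normalizedNeg
  fun_prop (disch := intro; positivity)

theorem norm_normalizedNeg_sq_le_neg_inner (x : E) :
    ‖normalizedNeg x‖ ^ 2 ≤ -⟪x, normalizedNeg x⟫ := by
  set c := 1 / √(1 + ‖x‖ ^ 2)
  have hc0 : 0 ≤ c := by positivity
  have hc1 : c ≤ 1 :=
    div_le_one_of_le₀ (Real.one_le_sqrt.2 (by simp)) (Real.sqrt_nonneg _)
  calc ‖normalizedNeg x‖ ^ 2 = c ^ 2 * ‖x‖ ^ 2 := by
        rw [normalizedNeg, norm_smul, norm_neg, Real.norm_of_nonneg hc0, mul_pow]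
    _ ≤ c * ‖x‖ ^ 2 := by gcongr; nlinarith
    _ = -⟪x, normalizedNeg x⟫ := by
        rw [normalizedNeg, real_inner_smul_right, real_inner_self_eq_norm_sq]; ring

end InnerProductSpace

/-- Hilbert-space version of Lemma 2.7 of the paper: along a flow line of the
normalized negative gradient vector field `u' = -v(u)/√(1+‖v(u)‖²)`, the
squared distance between the endpoints is bounded by the elapsed time times
minus the action variation `∫₀ᴿ -⟨v(u), u'⟩`. -/
theorem dist_sq_le_time_mul_action_variation
    {𝓗 : Type*} [NormedAddCommGroup 𝓗] [InnerProductSpace ℝ 𝓗]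
    (v : 𝓗 → 𝓗) (hv : Continuous v)
    (R : ℝ) (hR : 0 < R)
    (u : ℝ → 𝓗)
    (hu : ∀ r ∈ Set.Icc (0:ℝ) R,
      HasDerivAt u ((-(1 / Real.sqrt (1 + ‖v (u r)‖ ^ 2))) • v (u r)) r) :
    ‖u R - u 0‖ ^ 2 ≤ R * ∫ r in (0:ℝ)..R, -⟪v (u r), deriv u r⟫ := by
  have hflow : ∀ r ∈ Icc 0 R, HasDerivAt u (normalizedNeg (v (u r))) r := hu
  have hcont : ContinuousOn (fun r => v (u r)) (Icc 0 R) :=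
    hv.comp_continuousOn fun r hr => (hflow r hr).continuousAt.continuousWithinAt
  have hvel : ContinuousOn (fun r => normalizedNeg (v (u r))) (Icc 0 R) :=
    continuous_normalizedNeg.comp_continuousOn hcont
  calc ‖u R - u 0‖ ^ 2 ≤ (R - 0) * ∫ r in 0..R, ‖normalizedNeg (v (u r))‖ ^ 2 :=
        norm_sub_sq_le_mul_integral_norm_sq_of_hasDerivAt hR.le hflow hvel
    _ ≤ R * ∫ r in 0..R, -⟪v (u r), normalizedNeg (v (u r))⟫ := by
        rw [sub_zero]
        gcongr
        exact integral_mono_on hR.le ((hvel.norm.pow 2).intervalIntegrable_of_Icc hR.le)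
          ((hcont.inner hvel).neg.intervalIntegrable_of_Icc hR.le)
          fun r _ => norm_normalizedNeg_sq_le_neg_inner _
    _ = R * ∫ r in 0..R, -⟪v (u r), deriv u r⟫ := by
        congr 1
        refine integral_congr fun r hr => ?_
        rw [uIcc_of_le hR.le] at hr
        simp only [(hflow r hr).deriv]
end
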